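/- Let 𝒫=(P,w) be a positive-weighted polygon with V(P)={1,...,n} that is not pruned. Then P has exactly one useless edge e, and deleting e from P yields a positive-weighted snake 𝒫̃ with V(𝒫̃)={1,...,n} whose 2-weights coincide with those of 𝒫, i.e. D_{i,j}(𝒫̃)=D_{i,j}(𝒫) for all distinct i,j. -/

import Mathlib

open SimpleGraph

variable {V : Type*}

/-- weight of a walk: sum of the weights of its edges -/
noncomputable def walkWeight (G : SimpleGraph V) (w : Sym2 V → ℝ) {i j : V} (p : G.Walk i j) : ℝ :=
  (p.edges.map w).sum

/-- the 2-weight: min over paths joining i and j -/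
noncomputable def wdist (G : SimpleGraph V) (w : Sym2 V → ℝ) (i j : V) : ℝ :=
  sInf {x : ℝ | ∃ p : G.Walk i j, p.IsPath ∧ walkWeight G w p = x}

def Realizes (G : SimpleGraph V) (w : Sym2 V → ℝ) {i j : V} (p : G.Walk i j) : Prop :=
  p.IsPath ∧ walkWeight G w p = wdist G w i j

def UsefulEdge (G : SimpleGraph V) (w : Sym2 V → ℝ) (e : Sym2 V) : Prop :=
  ∃ a b : V, a ≠ b ∧ ∀ p : G.Walk a b, Realizes G w p → e ∈ p.edges

def Pruned (G : SimpleGraph V) (w : Sym2 V → ℝ) : Prop :=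
  ∀ e ∈ G.edgeSet, UsefulEdge G w e

def PosWeights (G : SimpleGraph V) (w : Sym2 V → ℝ) : Prop :=
  ∀ e ∈ G.edgeSet, 0 < w e

def Indec (G : SimpleGraph V) (w : Sym2 V → ℝ) (i j : V) : Prop :=
  ∀ z : V, z ≠ i → z ≠ j → wdist G w i j < wdist G w i z + wdist G w z j

def IsLeaf (G : SimpleGraph V) (v : V) : Prop := (G.neighborSet v).ncard = 1

def IsSnake (G : SimpleGraph V) : Prop :=
  G.IsTree ∧ {v : V | IsLeaf G v}.ncard = 2

def IsCaterpillar (G : SimpleGraph V) : Prop :=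
  G.IsTree ∧ ∃ (x₁ x₂ : V) (p : G.Walk x₁ x₂), p.IsPath ∧
    {v : V | v ∈ p.support} = {v : V | 2 ≤ (G.neighborSet v).ncard}

def IsPolygon {n : ℕ} [NeZero n] (G : SimpleGraph (Fin n)) : Prop :=
  ∃ σ : Equiv.Perm (Fin n), G.edgeSet = Set.range (fun i : Fin n => s(σ i, σ (i + 1)))

noncomputable def tmin (G : SimpleGraph V) (w : Sym2 V → ℝ) (x : V) : ℝ :=
  (1 / 2) * sInf {r : ℝ | ∃ y z : V, y ≠ x ∧ z ≠ x ∧ y ≠ z ∧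
    r = wdist G w x y + wdist G w x z - wdist G w y z}

def IsBipartiteOn (G : SimpleGraph V) (X Y : Set V) : Prop :=
  X ∩ Y = ∅ ∧ X ∪ Y = Set.univ ∧ ∀ a b : V, G.Adj a b → (a ∈ X ∧ b ∈ Y) ∨ (a ∈ Y ∧ b ∈ X)

noncomputable def chainSum {α : Type*} (D : α → α → ℝ) : List α → ℝ
  | [] => 0
  | [_] => 0
  | a :: b :: l => D a b + chainSum D (b :: l)

def FIndec {n : ℕ} (D : Fin n → Fin n → ℝ) (i j : Fin n) : Prop :=
  ∀ z : Fin n, z ≠ i → z ≠ j → D i j < D i z + D z j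

def TriangleIneq {n : ℕ} (D : Fin n → Fin n → ℝ) : Prop :=
  ∀ i j k : Fin n, i ≠ j → j ≠ k → i ≠ k → D i j ≤ D i k + D k j

def MaxTwice (x y z : ℝ) : Prop :=
  (x = y ∧ z ≤ x) ∨ (x = z ∧ y ≤ x) ∨ (y = z ∧ x ≤ y)

def FourPoint {n : ℕ} (D : Fin n → Fin n → ℝ) : Prop :=
  ∀ i j k h : Fin n, i ≠ j → i ≠ k → i ≠ h → j ≠ k → j ≠ h → k ≠ h →
    MaxTwice (D i j + D k h) (D i k + D j h) (D i h + D k j)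

def MedianFamily {n : ℕ} (D : Fin n → Fin n → ℝ) : Prop :=
  ∀ a b c : Fin n, ∃! m : Fin n,
    ∀ i ∈ ({a, b, c} : Set (Fin n)), ∀ j ∈ ({a, b, c} : Set (Fin n)), i ≠ j →
      D i j = D i m + D j m

noncomputable def tminF {n : ℕ} (D : Fin n → Fin n → ℝ) (x : Fin n) : ℝ :=
  (1 / 2) * sInf {r : ℝ | ∃ y z : Fin n, y ≠ x ∧ z ≠ x ∧ y ≠ z ∧ r = D x y + D x z - D y z}

def interiorSet {G : SimpleGraph V} {u v : V} (p : G.Walk u v) : Set V :=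
  {x : V | x ∈ p.support ∧ x ≠ u ∧ x ≠ v}

/-!
A useless edge `e` can be avoided by a realizing path between any two vertices, so deleting it
keeps every 2-weight and keeps the graph connected. For a polygon, `P - e` then has `n - 1`
edges, so it is a tree; as every vertex of `P` has degree 2, its leaves are the two ends of `e`.
If `e' = s(a, b) ≠ e` were also useless, `e'` is a bridge of the tree `P - e`, so a realizing
`a`–`b` path avoiding `e'` runs through `e` and at least one more edge, giving
`w e < D a b ≤ w e'`; by symmetry `w e' < w e` as well.
-/

section WeightedPaths

variable {G H : SimpleGraph V} {w : Sym2 V → ℝ}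

lemma walkWeight_transfer {u v : V} (p : G.Walk u v) (hp : ∀ e ∈ p.edges, e ∈ H.edgeSet) :
    walkWeight H w (p.transfer H hp) = walkWeight G w p := by
  simp only [walkWeight, Walk.edges_transfer]

lemma walkWeight_nonneg (hw : ∀ e ∈ G.edgeSet, 0 ≤ w e) {u v : V} (p : G.Walk u v) :
    0 ≤ walkWeight G w p :=
  List.sum_nonneg <| by simpa using fun e he => hw e (p.edges_subset_edgeSet he)

lemma lt_walkWeight_of_mem_edges (hw : PosWeights G w) {u v : V} {p : G.Walk u v}
    {e : Sym2 V} (he : e ∈ p.edges) (hne : p.edges ≠ [e]) : w e < walkWeight G w p := by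
  classical
  rw [walkWeight, ((List.perm_cons_erase he).map w).sum_eq, List.map_cons, List.sum_cons,
    lt_add_iff_pos_right]
  have hpos : ∀ x ∈ (p.edges.erase e).map w, 0 < x := by
    simpa using fun e' he' => hw e' (p.edges_subset_edgeSet (List.mem_of_mem_erase he'))
  refine List.sum_pos _ hpos ?_
  rw [Ne, List.map_eq_nil_iff]
  intro h
  exact hne (by simpa [h] using List.perm_cons_erase he)

lemma wdist_le_walkWeight (hw : ∀ e ∈ G.edgeSet, 0 ≤ w e) {u v : V} (p : G.Walk u v)
    (hp : p.IsPath) : wdist G w u v ≤ walkWeight G w p :=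
  csInf_le ⟨0, by rintro _ ⟨q, -, rfl⟩; exact walkWeight_nonneg hw q⟩ ⟨p, hp, rfl⟩

lemma wdist_le_of_adj (hw : ∀ e ∈ G.edgeSet, 0 ≤ w e) {u v : V} (h : G.Adj u v) :
    wdist G w u v ≤ w s(u, v) := by
  simpa [walkWeight] using wdist_le_walkWeight hw h.toWalk h.isPath_toWalk

end WeightedPaths

section UselessEdges

variable {G : SimpleGraph V} {w : Sym2 V → ℝ} {e : Sym2 V}

lemma exists_realizes_notMem_edges (hu : ¬UsefulEdge G w e) {a b : V} (hab : a ≠ b) :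
    ∃ p : G.Walk a b, Realizes G w p ∧ e ∉ p.edges := by
  unfold UsefulEdge at hu
  push Not at hu
  exact hu a b hab

lemma preconnected_deleteEdges_of_not_usefulEdge (hu : ¬UsefulEdge G w e) :
    (G.deleteEdges {e}).Preconnected := by
  intro a b
  obtain rfl | hab := eq_or_ne a b
  · rfl
  obtain ⟨p, -, hp⟩ := exists_realizes_notMem_edges hu hab
  exact (p.toDeleteEdge e hp).reachable

lemma wdist_deleteEdges_of_not_usefulEdge (hw : ∀ e ∈ G.edgeSet, 0 ≤ w e)
    (hu : ¬UsefulEdge G w e) {a b : V} (hab : a ≠ b) :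
    wdist (G.deleteEdges {e}) w a b = wdist G w a b := by
  obtain ⟨p, ⟨hpath, hpw⟩, hep⟩ := exists_realizes_notMem_edges hu hab
  have hle : G.deleteEdges {e} ≤ G := deleteEdges_le _
  have hp' : (p.toDeleteEdge e hep).IsPath := hpath.transfer _
  apply le_antisymm
  · calc wdist (G.deleteEdges {e}) w a b ≤ walkWeight _ w (p.toDeleteEdge e hep) :=
          wdist_le_walkWeight (fun e' he' => hw e' (edgeSet_mono hle he')) _ hp'
      _ = wdist G w a b := by rw [walkWeight_transfer, hpw]
  · refine le_csInf ⟨_, _, hp', rfl⟩ ?_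
    rintro _ ⟨q, hq, rfl⟩
    have hqG : ∀ e' ∈ q.edges, e' ∈ G.edgeSet := fun e' he' =>
      edgeSet_mono hle (q.edges_subset_edgeSet he')
    rw [← walkWeight_transfer q hqG]
    exact wdist_le_walkWeight hw _ (hq.transfer hqG)

lemma isTree_deleteEdges_of_not_usefulEdge [Finite V] [Nonempty V]
    (hcard : G.edgeSet.ncard = Nat.card V) (he : e ∈ G.edgeSet) (hu : ¬UsefulEdge G w e) :
    (G.deleteEdges {e}).IsTree := by
  rw [isTree_iff_connected_and_card, Nat.card_coe_set_eq, edgeSet_deleteEdges,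
    Set.ncard_sdiff_singleton_of_mem he, hcard]
  have := (Set.ncard_pos (Set.toFinite _)).2 ⟨e, he⟩
  exact ⟨⟨preconnected_deleteEdges_of_not_usefulEdge hu⟩, by omega⟩

lemma weight_lt_of_not_usefulEdge (hw : PosWeights G w) {e' : Sym2 V}
    (hacyc : (G.deleteEdges {e}).IsAcyclic) (he' : e' ∈ G.edgeSet) (hne : e ≠ e')
    (hu : ¬UsefulEdge G w e') : w e < w e' := by
  induction e' using Sym2.ind with | _ a b => ?_
  have hab : G.Adj a b := he'
  obtain ⟨p, ⟨-, hpw⟩, hp⟩ := exists_realizes_notMem_edges hu hab.ne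
  have hep : e ∈ p.edges := by
    by_contra h
    have hbridge := isAcyclic_iff_forall_adj_isBridge.1 hacyc
      (deleteEdges_adj.2 ⟨hab, by simpa [eq_comm] using hne⟩)
    have := isBridge_iff_forall_walk_mem_edges.1 hbridge (p.toDeleteEdge e h)
    rw [Walk.edges_transfer] at this
    exact hp this
  have hlen : p.edges ≠ [e] := by
    intro h
    cases p with
    | nil => simp at h
    | cons h' q => cases q with
      | nil => exact hne (by simpa [eq_comm] using h)
      | cons _ _ => simp at h
  calc w e < walkWeight G w p := lt_walkWeight_of_mem_edges hw hep hlen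
    _ = wdist G w a b := hpw
    _ ≤ w s(a, b) := wdist_le_of_adj (fun e he => (hw e he).le) hab

end UselessEdges

section Leaves

variable {G : SimpleGraph V}

lemma neighborSet_deleteEdges_of_ne {a b v : V} (ha : v ≠ a) (hb : v ≠ b) :
    (G.deleteEdges {s(a, b)}).neighborSet v = G.neighborSet v := by
  ext x
  simp [deleteEdges_adj, ha, hb]

lemma neighborSet_deleteEdges_left (a b : V) :
    (G.deleteEdges {s(a, b)}).neighborSet a = G.neighborSet a \ {b} := by
  ext x
  simp only [mem_neighborSet, deleteEdges_adj, Set.mem_sdiff, Set.mem_singleton_iff, Sym2.eq_iff]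
  grind [Adj.ne]

lemma setOf_isLeaf_deleteEdges [Finite V] (hreg : ∀ v, (G.neighborSet v).ncard = 2)
    {a b : V} (hab : G.Adj a b) : {v | IsLeaf (G.deleteEdges {s(a, b)}) v} = {a, b} := by
  ext v
  simp only [Set.mem_ofPred_eq, IsLeaf, Set.mem_insert_iff, Set.mem_singleton_iff]
  by_cases ha : v = a
  · subst ha
    rw [neighborSet_deleteEdges_left, Set.ncard_sdiff_singleton_of_mem
      ((G.mem_neighborSet _ _).2 hab), hreg]
    simp
  by_cases hb : v = b
  · subst hb
    rw [Sym2.eq_swap, neighborSet_deleteEdges_left, Set.ncard_sdiff_singleton_of_mem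
      ((G.mem_neighborSet _ _).2 hab.symm), hreg]
    simp
  simp [neighborSet_deleteEdges_of_ne ha hb, hreg, ha, hb]

end Leaves

section Polygon

variable {n : ℕ} [NeZero n]

lemma Fin.add_one_add_one_ne_self (hn : 3 ≤ n) (i : Fin n) : i + 1 + 1 ≠ i := by
  rw [Ne, add_assoc, add_eq_left, Fin.ext_iff, Fin.val_add, Fin.val_one', Fin.val_zero,
    Nat.mod_eq_of_lt (by omega : 1 < n), Nat.mod_eq_of_lt (by omega : 1 + 1 < n)]
  omega

lemma IsPolygon.ncard_edgeSet (hn : 3 ≤ n) {P : SimpleGraph (Fin n)} (hP : IsPolygon P) :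
    P.edgeSet.ncard = n := by
  obtain ⟨σ, hσ⟩ := hP
  rw [hσ, Set.ncard_range_of_injective, Nat.card_fin]
  intro i j hij
  rcases Sym2.eq_iff.1 hij with ⟨h, -⟩ | ⟨h₁, h₂⟩
  · exact σ.injective h
  · rw [σ.injective h₁] at h₂
    exact absurd (σ.injective h₂) (Fin.add_one_add_one_ne_self hn j)

lemma IsPolygon.ncard_neighborSet (hn : 3 ≤ n) {P : SimpleGraph (Fin n)} (hP : IsPolygon P)
    (v : Fin n) : (P.neighborSet v).ncard = 2 := by
  obtain ⟨σ, hσ⟩ := hP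
  obtain ⟨i, rfl⟩ := σ.surjective v
  have hnbr : P.neighborSet (σ i) = {σ (i + 1), σ (i - 1)} := by
    ext x
    rw [mem_neighborSet, ← mem_edgeSet, hσ]
    simp only [Set.mem_range, Sym2.eq_iff, σ.apply_eq_iff_eq, Set.mem_insert_iff,
      Set.mem_singleton_iff]
    constructor
    · rintro ⟨j, ⟨rfl, rfl⟩ | ⟨rfl, rfl⟩⟩
      · exact Or.inl rfl
      · simp
    · rintro (rfl | rfl)
      · exact ⟨i, Or.inl ⟨rfl, rfl⟩⟩
      · exact ⟨i - 1, Or.inr ⟨rfl, sub_add_cancel i 1⟩⟩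
  rw [hnbr, Set.ncard_pair]
  intro h
  apply Fin.add_one_add_one_ne_self hn (i - 1)
  rw [sub_add_cancel, ← σ.injective h]

end Polygon

/-- A positive-weighted polygon which is not pruned has exactly one useless edge, and
deleting it yields a positive-weighted snake with the same 2-weights. -/
theorem stmt_9 {n : ℕ} [NeZero n] (hn : 3 ≤ n) (P : SimpleGraph (Fin n))
    (hpoly : IsPolygon P) (w : Sym2 (Fin n) → ℝ) (hw : PosWeights P w)
    (hnp : ¬ Pruned P w) :
    ∃ e ∈ P.edgeSet, ¬ UsefulEdge P w e ∧
      (∀ e' ∈ P.edgeSet, ¬ UsefulEdge P w e' → e' = e) ∧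
      IsSnake (P.deleteEdges {e}) ∧
      ∀ i j : Fin n, i ≠ j → wdist (P.deleteEdges {e}) w i j = wdist P w i j := by
  obtain ⟨e, he, hu⟩ : ∃ e ∈ P.edgeSet, ¬UsefulEdge P w e := by simpa [Pruned] using hnp
  have htree : ∀ e ∈ P.edgeSet, ¬UsefulEdge P w e → (P.deleteEdges {e}).IsTree :=
    fun e he hu => isTree_deleteEdges_of_not_usefulEdge
      (by rw [hpoly.ncard_edgeSet hn, Nat.card_fin]) he hu
  refine ⟨e, he, hu, fun e' he' hu' => ?_, ?_,
    fun i j hij => wdist_deleteEdges_of_not_usefulEdge (fun e he => (hw e he).le) hu hij⟩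
  · by_contra hne
    exact lt_asymm
      (weight_lt_of_not_usefulEdge hw (htree e he hu).isAcyclic he' (Ne.symm hne) hu')
      (weight_lt_of_not_usefulEdge hw (htree e' he' hu').isAcyclic he hne hu)
  · refine ⟨htree e he hu, ?_⟩
    induction e using Sym2.ind with | _ a b => ?_
    rw [setOf_isLeaf_deleteEdges (hpoly.ncard_neighborSet hn) he, Set.ncard_pair he.ne]
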